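/- arXiv:math/0103056 — 3 statements merged into one kernel-verified Lean document; each statement's English description precedes it below -/
import Mathlib

section
/- Let G be a row-finite directed graph which satisfies Condition (K), and let (E, v_0) be a 1-sink extension of G. If v ∈ H_E (the inessential part of E) and n_E(v) > 0, where n_E(v) denotes the number of paths in E with source v and range v_0, then there does not exist an edge e ∈ G^1 with s(e) = r(e) = v. -/
/-- A directed graph realized inside ambient vertex type `V` and edge type `E`,
with globally given source and range maps. -/
structure DGraph (V E : Type*) where
  verts : Set V
  edges : Set E

variable {V E : Type*}

/-- The endpoints of every edge of the graph are vertices of the graph. -/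
def WellFormed (s r : E → V) (G : DGraph V E) : Prop :=
  ∀ e ∈ G.edges, s e ∈ G.verts ∧ r e ∈ G.verts

/-- Row-finite: every vertex emits only finitely many edges. -/
def RowFinite (s : E → V) (G : DGraph V E) : Prop :=
  ∀ v : V, {e ∈ G.edges | s e = v}.Finite

/-- A sink is a vertex emitting no edges. -/
def IsSink (s : E → V) (G : DGraph V E) (v : V) : Prop :=
  v ∈ G.verts ∧ ∀ e ∈ G.edges, s e ≠ v

/-- A source is a vertex receiving no edges. -/
def IsSource (r : E → V) (G : DGraph V E) (v : V) : Prop :=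
  v ∈ G.verts ∧ ∀ e ∈ G.edges, r e ≠ v

/-- A path is a nonempty finite sequence of composable edges of the graph. -/
def IsPath (s r : E → V) (G : DGraph V E) (p : List E) : Prop :=
  p ≠ [] ∧ (∀ e ∈ p, e ∈ G.edges) ∧ p.Chain' (fun e f => r e = s f)

/-- `PathFromTo s r G p v w` : `p` is a path in `G` with source `v` and range `w`. -/
def PathFromTo (s r : E → V) (G : DGraph V E) (p : List E) (v w : V) : Prop :=
  IsPath s r G p ∧ (∃ e, p.head? = some e ∧ s e = v) ∧
    (∃ e, p.getLast? = some e ∧ r e = w)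

/-- `v ≥ w` : `v = w` or there is a path from `v` to `w`. -/
def Reach (s r : E → V) (G : DGraph V E) (v w : V) : Prop :=
  v = w ∨ ∃ p, PathFromTo s r G p v w

/-- A loop based at `v` is a path with source and range `v`. -/
def IsLoop (s r : E → V) (G : DGraph V E) (p : List E) (v : V) : Prop :=
  PathFromTo s r G p v v

/-- A simple loop returns to its base point exactly once. -/
def IsSimpleLoop (s r : E → V) (G : DGraph V E) (p : List E) (v : V) : Prop :=
  IsLoop s r G p v ∧
    ∀ i (h : i + 1 < p.length), r (p.get ⟨i, Nat.lt_of_succ_lt h⟩) ≠ v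

/-- Condition (K): every vertex is the base of no loop or of at least two
distinct simple loops. -/
def ConditionK (s r : E → V) (G : DGraph V E) : Prop :=
  ∀ v ∈ G.verts, (¬ ∃ p, IsLoop s r G p v) ∨
    ∃ p q, IsSimpleLoop s r G p v ∧ IsSimpleLoop s r G q v ∧ p ≠ q

/-- A maximal tail in `G`. -/
def MaximalTail (s r : E → V) (G : DGraph V E) (γ : Set V) : Prop :=
  γ.Nonempty ∧ γ ⊆ G.verts ∧
  (∀ v ∈ γ, ∀ w ∈ γ, ∃ y ∈ γ, Reach s r G v y ∧ Reach s r G w y) ∧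
  (∀ v w, Reach s r G v w → w ∈ γ → v ∈ γ) ∧
  (∀ w ∈ γ, ∃ e ∈ G.edges, s e = w ∧ r e ∈ γ)

/-- `(Eg, v0)` is a 1-sink extension of `G`. -/
structure OneSinkExt (s r : E → V) (G Eg : DGraph V E) (v0 : V) : Prop where
  wfG : WellFormed s r G
  wfE : WellFormed s r Eg
  sub_verts : G.verts ⊆ Eg.verts
  sub_edges : G.edges ⊆ Eg.edges
  rowfin : RowFinite s Eg
  H_fin : (Eg.verts \ G.verts).Finite
  H_no_sources : ∀ v ∈ Eg.verts \ G.verts, ¬ IsSource r Eg v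
  v0_mem : v0 ∈ Eg.verts \ G.verts
  v0_sink : IsSink s Eg v0
  sink_unique : ∀ v ∈ Eg.verts \ G.verts, IsSink s Eg v → v = v0
  no_H_loops : ∀ p v, IsLoop s r Eg p v →
    ¬ (∀ e ∈ p, s e ∈ Eg.verts \ G.verts ∧ r e ∈ Eg.verts \ G.verts)
  new_edge_range : ∀ e ∈ Eg.edges, e ∉ G.edges → r e ∈ Eg.verts \ G.verts
  sinks_preserved : ∀ v, IsSink s G v → IsSink s Eg v

/-- The closure of the sink `v0` : the union of all maximal tails of `G`
every vertex of which reaches `v0` in `Eg`. -/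
def closureSink (s r : E → V) (G Eg : DGraph V E) (v0 : V) : Set V :=
  {v | ∃ γ, MaximalTail s r G γ ∧ (∀ u ∈ γ, Reach s r Eg u v0) ∧ v ∈ γ}

/-- Hereditary subset of vertices. -/
def Hereditary (s r : E → V) (G : DGraph V E) (K : Set V) : Prop :=
  ∀ e ∈ G.edges, s e ∈ K → r e ∈ K

/-- Saturated subset of vertices. -/
def Saturated (s r : E → V) (G : DGraph V E) (K : Set V) : Prop :=
  ∀ v ∈ G.verts, ¬ IsSink s G v → (∀ e ∈ G.edges, s e = v → r e ∈ K) → v ∈ K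

/-! If a vertex `v` of `G` carries a loop, the vertices of `G` reaching `v` form a maximal tail:
any two of them meet at `v`, and a first edge of a path to `v` (or of the loop itself, for `v`)
stays inside the set. When moreover `v` reaches `v0` in `Eg`, so does every vertex of this tail,
hence `v` lies in the closure of `v0`. -/

section Paths

variable {s r : E → V} {G : DGraph V E}

lemma pathFromTo_singleton {e : E} (he : e ∈ G.edges) : PathFromTo s r G [e] (s e) (r e) :=
  ⟨⟨List.cons_ne_nil _ _, by simpa using he, List.isChain_singleton _⟩, ⟨e, rfl, rfl⟩,
    ⟨e, rfl, rfl⟩⟩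

lemma PathFromTo.append {p q : List E} {u w x : V}
    (hp : PathFromTo s r G p u w) (hq : PathFromTo s r G q w x) :
    PathFromTo s r G (p ++ q) u x := by
  obtain ⟨⟨hpne, hpmem, hpch⟩, ⟨e, he, hse⟩, ⟨f, hf, hrf⟩⟩ := hp
  obtain ⟨⟨-, hqmem, hqch⟩, ⟨g, hg, hsg⟩, ⟨h, hh, hrh⟩⟩ := hq
  refine ⟨⟨by simp [hpne], ?_, ?_⟩, ⟨e, ?_, hse⟩, ⟨h, ?_, hrh⟩⟩
  · intro a ha
    exact (List.mem_append.mp ha).elim (hpmem a) (hqmem a)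
  · refine List.isChain_append.mpr ⟨hpch, hqch, ?_⟩
    rintro a ha b hb
    rw [hf, Option.mem_some_iff] at ha
    rw [hg, Option.mem_some_iff] at hb
    subst ha hb
    rw [hrf, hsg]
  · rw [List.head?_append, he]; rfl
  · rw [List.getLast?_append, hh]; rfl

lemma PathFromTo.exists_edge_reach {p : List E} {w v : V} (hp : PathFromTo s r G p w v) :
    ∃ e ∈ G.edges, s e = w ∧ Reach s r G (r e) v := by
  obtain ⟨⟨hne, hmem, hch⟩, ⟨f, hf, hsf⟩, ⟨g, hg, hrg⟩⟩ := hp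
  obtain ⟨a, t, rfl⟩ := List.exists_cons_of_ne_nil hne
  obtain rfl : a = f := Option.some_injective _ hf
  refine ⟨a, hmem a List.mem_cons_self, hsf, ?_⟩
  rcases t with _ | ⟨b, t⟩
  · obtain rfl : a = g := Option.some_injective _ hg
    exact Or.inl hrg
  · obtain ⟨hab, htch⟩ := List.isChain_cons_cons.mp hch
    refine Or.inr ⟨b :: t, ⟨List.cons_ne_nil _ _, fun x hx => hmem x (List.mem_cons_of_mem a hx),
      htch⟩, ⟨b, rfl, hab.symm⟩, ⟨g, ?_, hrg⟩⟩
    rw [← hg, List.getLast?_cons_cons]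

lemma PathFromTo.source_mem (hwf : WellFormed s r G) {p : List E} {w v : V}
    (hp : PathFromTo s r G p w v) : w ∈ G.verts := by
  obtain ⟨e, he, rfl, -⟩ := hp.exists_edge_reach
  exact (hwf e he).1

lemma Reach.trans {u w x : V} (h₁ : Reach s r G u w) (h₂ : Reach s r G w x) :
    Reach s r G u x := by
  rcases h₁ with rfl | ⟨p, hp⟩
  · exact h₂
  rcases h₂ with rfl | ⟨q, hq⟩
  · exact Or.inr ⟨p, hp⟩
  · exact Or.inr ⟨p ++ q, hp.append hq⟩

lemma Reach.mono {Eg : DGraph V E} (hsub : G.edges ⊆ Eg.edges) {u w : V}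
    (h : Reach s r G u w) : Reach s r Eg u w := by
  rcases h with rfl | ⟨p, ⟨hne, hmem, hch⟩, hs, hr⟩
  · exact Or.inl rfl
  · exact Or.inr ⟨p, ⟨hne, fun e he => hsub (hmem e he), hch⟩, hs, hr⟩

lemma Reach.mem_verts (hwf : WellFormed s r G) {w v : V} (h : Reach s r G w v)
    (hv : v ∈ G.verts) : w ∈ G.verts := by
  rcases h with rfl | ⟨p, hp⟩
  exacts [hv, hp.source_mem hwf]

end Paths

variable {s r : E → V}

lemma maximalTail_setOf_reach_of_isLoop {G : DGraph V E} (hwf : WellFormed s r G)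
    {p : List E} {v : V} (hloop : IsLoop s r G p v) :
    MaximalTail s r G {w | Reach s r G w v} := by
  have hpath : ∀ w, Reach s r G w v → ∃ q, PathFromTo s r G q w v := by
    rintro w (rfl | hq)
    exacts [⟨p, hloop⟩, hq]
  refine ⟨⟨v, Or.inl rfl⟩, fun w hw => hw.mem_verts hwf (hloop.source_mem hwf),
    fun a ha b hb => ⟨v, Or.inl rfl, ha, hb⟩, fun a b hab hb => hab.trans hb, ?_⟩
  intro w hw
  obtain ⟨q, hq⟩ := hpath w hw
  exact hq.exists_edge_reach

lemma mem_closureSink_of_isLoop {G Eg : DGraph V E} {v0 : V} (hwf : WellFormed s r G)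
    (hsub : G.edges ⊆ Eg.edges) {p : List E} {v : V} (hloop : IsLoop s r G p v)
    (hv0 : Reach s r Eg v v0) : v ∈ closureSink s r G Eg v0 :=
  ⟨_, maximalTail_setOf_reach_of_isLoop hwf hloop, fun _ hu => (hu.mono hsub).trans hv0,
    Or.inl rfl⟩

theorem no_loop_edge_at_inessential_vertex_reaching_sink_general
    (s r : E → V) (G Eg : DGraph V E) (v0 : V)
    (hext : OneSinkExt s r G Eg v0)
    (v : V) (hv : v ∈ G.verts \ closureSink s r G Eg v0)
    (hn : {p : List E | PathFromTo s r Eg p v v0}.Nonempty) :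
    ¬ ∃ e ∈ G.edges, s e = v ∧ r e = v := by
  rintro ⟨e, he, rfl, hre⟩
  have hloop : IsLoop s r G [e] (s e) := by
    have h := pathFromTo_singleton (s := s) (r := r) he
    rwa [hre] at h
  obtain ⟨q, hq⟩ := hn
  exact hv.2 (mem_closureSink_of_isLoop hext.wfG hext.sub_edges hloop (Or.inr ⟨q, hq⟩))

/-- If `v` lies in the inessential part of a 1-sink extension
`(Eg, v0)` of a row-finite graph `G` satisfying Condition (K), and there
exists at least one path in `Eg` from `v` to `v0` (i.e. `n_E(v) > 0`), then
there is no edge `e ∈ G^1` with `s e = r e = v`. -/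
theorem no_loop_edge_at_inessential_vertex_reaching_sink
    (s r : E → V) (G Eg : DGraph V E) (v0 : V)
    (hGrf : RowFinite s G) (hK : ConditionK s r G)
    (hext : OneSinkExt s r G Eg v0)
    (v : V) (hv : v ∈ G.verts \ closureSink s r G Eg v0)
    (hn : {p : List E | PathFromTo s r Eg p v v0}.Nonempty) :
    ¬ ∃ e ∈ G.edges, s e = v ∧ r e = v :=
  no_loop_edge_at_inessential_vertex_reaching_sink_general s r G Eg v0 hext v hv hn
end

section
/- Let G be a row-finite directed graph which satisfies Condition (K), and let (E, v_0) be a 1-sink extension of G such that the set of paths in E with range v_0 is infinite. Then H_E ∪ H_{v_0} is a saturated hereditary subset of E^0, where H_E is the inessential part of E and H_{v_0} := E^0 ∖ G^0. -/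
variable {V E : Type*}

/-!
A vertex of `G` lies in the closure of `v0` exactly when it lies in some maximal tail reaching
`v0`. Maximal tails are closed under going backwards along edges of `G`, so the complement of the
closure in `G⁰` is hereditary in `G`; every vertex of a maximal tail emits an edge of `G` back into
the tail, so that complement is also saturated. Edges of `E` outside `G` end in `E⁰ ∖ G⁰`, which
absorbs everything else.
-/

theorem Reach.of_edge {s r : E → V} {G : DGraph V E} {e : E} (he : e ∈ G.edges) :
    Reach s r G (s e) (r e) :=
  Or.inr ⟨[e], ⟨List.cons_ne_nil e [], by simpa using he, List.isChain_singleton e⟩,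
    ⟨e, rfl, rfl⟩, ⟨e, rfl, rfl⟩⟩

theorem MaximalTail.source_mem {s r : E → V} {G : DGraph V E} {γ : Set V}
    (hγ : MaximalTail s r G γ) {e : E} (he : e ∈ G.edges) (hr : r e ∈ γ) : s e ∈ γ :=
  hγ.2.2.2.1 _ _ (Reach.of_edge he) hr

section closureSink

variable {s r : E → V} {G Eg : DGraph V E} {v0 : V}

theorem source_mem_closureSink {e : E} (he : e ∈ G.edges)
    (hr : r e ∈ closureSink s r G Eg v0) : s e ∈ closureSink s r G Eg v0 := by
  obtain ⟨γ, hγ, hreach, hrγ⟩ := hr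
  exact ⟨γ, hγ, hreach, hγ.source_mem he hrγ⟩

theorem exists_edge_range_mem_closureSink {v : V} (hv : v ∈ closureSink s r G Eg v0) :
    ∃ e ∈ G.edges, s e = v ∧ r e ∈ closureSink s r G Eg v0 := by
  obtain ⟨γ, hγ, hreach, hvγ⟩ := hv
  obtain ⟨e, he, hse, hrγ⟩ := hγ.2.2.2.2 v hvγ
  exact ⟨e, he, hse, γ, hγ, hreach, hrγ⟩

variable (hext : OneSinkExt s r G Eg v0)
include hext

theorem OneSinkExt.hereditary_inessential_union :
    Hereditary s r Eg ((G.verts \ closureSink s r G Eg v0) ∪ (Eg.verts \ G.verts)) := by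
  intro e he hs
  by_cases heG : e ∈ G.edges
  · refine Or.inl ⟨(hext.wfG e heG).2, fun hr => ?_⟩
    rcases hs with ⟨-, hs⟩ | ⟨-, hs⟩
    · exact hs (source_mem_closureSink heG hr)
    · exact hs (hext.wfG e heG).1
  · exact Or.inr (hext.new_edge_range e he heG)

theorem OneSinkExt.saturated_inessential_union :
    Saturated s r Eg ((G.verts \ closureSink s r G Eg v0) ∪ (Eg.verts \ G.verts)) := by
  intro v hv _ hall
  by_cases hvG : v ∈ G.verts
  · refine Or.inl ⟨hvG, fun hvC => ?_⟩
    obtain ⟨e, he, rfl, hrC⟩ := exists_edge_range_mem_closureSink hvC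
    rcases hall e (hext.sub_edges he) rfl with ⟨-, hr⟩ | ⟨-, hr⟩
    · exact hr hrC
    · exact hr (hext.wfG e he).2
  · exact Or.inr ⟨hv, hvG⟩

end closureSink

theorem inessential_union_new_vertices_saturated_hereditary_general
    (s r : E → V) (G Eg : DGraph V E) (v0 : V)
    (hext : OneSinkExt s r G Eg v0) :
    ((G.verts \ closureSink s r G Eg v0) ∪ (Eg.verts \ G.verts)) ⊆ Eg.verts ∧
    Hereditary s r Eg
      ((G.verts \ closureSink s r G Eg v0) ∪ (Eg.verts \ G.verts)) ∧
    Saturated s r Eg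
      ((G.verts \ closureSink s r G Eg v0) ∪ (Eg.verts \ G.verts)) :=
  ⟨Set.union_subset (Set.sdiff_subset.trans hext.sub_verts) Set.sdiff_subset,
    hext.hereditary_inessential_union, hext.saturated_inessential_union⟩

/-- If `(Eg, v0)` is a 1-sink extension of a row-finite graph `G`
satisfying Condition (K), and the set of paths in `Eg` with range `v0` is
infinite, then `H_E ∪ H_{v0}` is a saturated hereditary subset of `E^0`,
where `H_E` is the inessential part and `H_{v0} = E^0 \ G^0`. -/
theorem inessential_union_new_vertices_saturated_hereditary
    (s r : E → V) (G Eg : DGraph V E) (v0 : V)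
    (hGrf : RowFinite s G) (hK : ConditionK s r G)
    (hext : OneSinkExt s r G Eg v0)
    (hinf : {p : List E |
        IsPath s r Eg p ∧ ∃ e, p.getLast? = some e ∧ r e = v0}.Infinite) :
    ((G.verts \ closureSink s r G Eg v0) ∪ (Eg.verts \ G.verts)) ⊆ Eg.verts ∧
    Hereditary s r Eg
      ((G.verts \ closureSink s r G Eg v0) ∪ (Eg.verts \ G.verts)) ∧
    Saturated s r Eg
      ((G.verts \ closureSink s r G Eg v0) ∪ (Eg.verts \ G.verts)) :=
  inessential_union_new_vertices_saturated_hereditary_general s r G Eg v0 hext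
end

section
/- Let G be a row-finite directed graph, let (E, v_0) be a 1-sink extension of G, and let e_1 e_2 e_3 ⋯ be an infinite path in G (i.e., e_i ∈ G^1 with r(e_i) = s(e_{i+1}) for all i ∈ ℕ) such that r(e_i) ≥ v_0 in E for every i ∈ ℕ. Then γ := {w ∈ G^0 : w ≥ s(e_i) for some i ∈ ℕ} is a maximal tail in G and γ ≥ v_0. -/
variable {V E : Type*}

/-!
Any two vertices of `γ` reach a common vertex `s(eₖ)` far enough along the path; a vertex of
`γ` either lies on the path, whose next edge stays in `γ`, or starts a path into it whose first
edge stays in `γ`. Each vertex of `γ` reaches some `r(eᵢ)` in `G ⊆ E`, hence reaches `v₀`.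
-/

namespace Reach

variable {s r : E → V} {G : DGraph V E} {u v w : V}

theorem refl (v : V) : Reach s r G v v := Or.inl rfl

theorem trans_s9 (huv : Reach s r G u v) (hvw : Reach s r G v w) : Reach s r G u w := by
  rcases huv with rfl | ⟨p, ⟨hp, hpG, hpc⟩, ⟨a, ha, rfl⟩, ⟨b, hb, hbv⟩⟩
  · exact hvw
  rcases hvw with rfl | ⟨q, ⟨-, hqG, hqc⟩, ⟨c, hc, hcv⟩, hq⟩
  · exact Or.inr ⟨p, ⟨hp, hpG, hpc⟩, ⟨a, ha, rfl⟩, ⟨b, hb, hbv⟩⟩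
  refine Or.inr ⟨p ++ q, ⟨by simp [hp], ?_, ?_⟩, ⟨a, ?_, rfl⟩, ?_⟩
  · simpa [or_imp, forall_and] using ⟨hpG, hqG⟩
  · rw [List.Chain', List.isChain_append]
    refine ⟨hpc, hqc, ?_⟩
    simp only [hb, hc, Option.mem_def, Option.some.injEq]
    rintro _ rfl _ rfl
    rw [hbv, hcv]
  · rwa [List.head?_append_of_ne_nil _ hp]
  · obtain ⟨d, hd, rfl⟩ := hq
    exact ⟨d, by rw [List.getLast?_append, hd]; rfl, rfl⟩

theorem of_mem_edges {e : E} (he : e ∈ G.edges) : Reach s r G (s e) (r e) :=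
  Or.inr ⟨[e], ⟨by simp, by simpa, List.isChain_singleton _⟩, ⟨e, rfl, rfl⟩, ⟨e, rfl, rfl⟩⟩

theorem mono_s9 {H : DGraph V E} (hGH : G.edges ⊆ H.edges) (h : Reach s r G v w) :
    Reach s r H v w := by
  rcases h with rfl | ⟨p, ⟨hp, hpG, hpc⟩, hsp, hrp⟩
  · exact refl v
  · exact Or.inr ⟨p, ⟨hp, fun e he => hGH (hpG e he), hpc⟩, hsp, hrp⟩

theorem eq_or_exists_edge (h : Reach s r G v w) :
    v = w ∨ ∃ e ∈ G.edges, s e = v ∧ Reach s r G (r e) w := by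
  rcases h with rfl | ⟨_ | ⟨a, t⟩, ⟨hp, hpG, hpc⟩, ⟨e, he, hev⟩, ⟨b, hb, hbw⟩⟩
  · exact Or.inl rfl
  · exact absurd rfl hp
  obtain rfl : a = e := by simpa using he
  refine Or.inr ⟨a, hpG a List.mem_cons_self, hev, ?_⟩
  rcases t with _ | ⟨c, t⟩
  · obtain rfl : a = b := by simpa using hb
    exact Or.inl hbw
  · rw [List.Chain', List.isChain_cons_cons] at hpc
    refine Or.inr ⟨c :: t, ⟨List.cons_ne_nil c t, fun x hx => hpG x (List.mem_cons_of_mem a hx),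
      hpc.2⟩, ⟨c, rfl, hpc.1.symm⟩, ⟨b, ?_, hbw⟩⟩
    rwa [List.getLast?_cons_cons] at hb

theorem mem_verts_s9 (hG : WellFormed s r G) (h : Reach s r G v w) (hw : w ∈ G.verts) :
    v ∈ G.verts := by
  rcases h.eq_or_exists_edge with rfl | ⟨e, he, rfl, -⟩
  · exact hw
  · exact (hG e he).1

end Reach

def pathTail (s r : E → V) (G : DGraph V E) (f : ℕ → E) : Set V :=
  {w | w ∈ G.verts ∧ ∃ i, Reach s r G w (s (f i))}

section InfinitePath

variable {s r : E → V} {G : DGraph V E} {f : ℕ → E}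

theorem reach_source_of_le (hf : ∀ i, f i ∈ G.edges) (hchain : ∀ i, r (f i) = s (f (i + 1)))
    {i k : ℕ} (hik : i ≤ k) : Reach s r G (s (f i)) (s (f k)) := by
  induction k, hik using Nat.le_induction with
  | base => exact Reach.refl _
  | succ k _ ih => exact ih.trans_s9 (hchain k ▸ Reach.of_mem_edges (hf k))

theorem source_mem_pathTail (hG : WellFormed s r G) (hf : ∀ i, f i ∈ G.edges) (i : ℕ) :
    s (f i) ∈ pathTail s r G f :=
  ⟨(hG _ (hf i)).1, i, Reach.refl _⟩

theorem maximalTail_pathTail (hG : WellFormed s r G) (hf : ∀ i, f i ∈ G.edges)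
    (hchain : ∀ i, r (f i) = s (f (i + 1))) : MaximalTail s r G (pathTail s r G f) := by
  refine ⟨⟨_, source_mem_pathTail hG hf 0⟩, fun v hv => hv.1, ?_, ?_, ?_⟩
  · rintro v ⟨-, i, hvi⟩ w ⟨-, j, hwj⟩
    exact ⟨s (f (max i j)), source_mem_pathTail hG hf _,
      hvi.trans_s9 (reach_source_of_le hf hchain (le_max_left i j)),
      hwj.trans_s9 (reach_source_of_le hf hchain (le_max_right i j))⟩
  · rintro v w hvw ⟨hw, i, hwi⟩
    exact ⟨hvw.mem_verts_s9 hG hw, i, hvw.trans_s9 hwi⟩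
  · rintro w ⟨-, i, hwi⟩
    rcases hwi.eq_or_exists_edge with rfl | ⟨e, he, rfl, hei⟩
    · exact ⟨f i, hf i, rfl, hchain i ▸ source_mem_pathTail hG hf (i + 1)⟩
    · exact ⟨e, he, rfl, (hG e he).2, i, hei⟩

end InfinitePath

theorem tail_of_infinite_path_is_maximal_tail_general
    (s r : E → V) (G Eg : DGraph V E) (v0 : V)
    (hext : OneSinkExt s r G Eg v0)
    (f : ℕ → E) (hf : ∀ i, f i ∈ G.edges)
    (hchain : ∀ i, r (f i) = s (f (i + 1)))
    (hreach : ∀ i, Reach s r Eg (r (f i)) v0) :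
    MaximalTail s r G {w | w ∈ G.verts ∧ ∃ i, Reach s r G w (s (f i))} ∧
    ∀ v ∈ {w | w ∈ G.verts ∧ ∃ i, Reach s r G w (s (f i))},
      Reach s r Eg v v0 := by
  refine ⟨maximalTail_pathTail hext.wfG hf hchain, ?_⟩
  rintro v ⟨-, i, hvi⟩
  exact (hvi.mono_s9 hext.sub_edges).trans_s9
    ((Reach.of_mem_edges (hext.sub_edges (hf i))).trans_s9 (hreach i))

/-- Given a 1-sink extension `(Eg, v0)` of a row-finite graph `G`
and an infinite path `e₁e₂e₃⋯` in `G` with `r(eᵢ) ≥ v0` in `Eg` for every `i`,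
the set `γ = {w ∈ G^0 : w ≥ s(eᵢ) for some i}` is a maximal tail of `G` and
`γ ≥ v0`. -/
theorem tail_of_infinite_path_is_maximal_tail
    (s r : E → V) (G Eg : DGraph V E) (v0 : V)
    (hGrf : RowFinite s G)
    (hext : OneSinkExt s r G Eg v0)
    (f : ℕ → E) (hf : ∀ i, f i ∈ G.edges)
    (hchain : ∀ i, r (f i) = s (f (i + 1)))
    (hreach : ∀ i, Reach s r Eg (r (f i)) v0) :
    MaximalTail s r G {w | w ∈ G.verts ∧ ∃ i, Reach s r G w (s (f i))} ∧
    ∀ v ∈ {w | w ∈ G.verts ∧ ∃ i, Reach s r G w (s (f i))},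
      Reach s r Eg v v0 :=
  tail_of_infinite_path_is_maximal_tail_general s r G Eg v0 hext f hf hchain hreach
end
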